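/- Let ξ ∈ ℝ, l > 0 and φ ∈ ℝ be such that z = l·e^{iφ} satisfies z⁴ − z² + 1 ≠ 0. Write f = l + 1/l and a = 2cos(2φ) + 3. Then f⁴ − (a+1)f² + (a−2)² = |z² − 1 + z⁻²|² ≠ 0 and Im θ_ξ(l·e^{iφ}) = √3 · f · sin φ · ( ξ + (f² − a) / (f⁴ − (a+1)f² + (a−2)²) ). -/

import Mathlib

/-- The complex phase function `θ_ξ(z) = √3 (z − 1/z)(ξ − 1/(z² − 1 + z⁻²))`. -/
noncomputable def phaseθ (ξ : ℝ) (z : ℂ) : ℂ :=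
  (Real.sqrt 3 : ℂ) * (z - 1 / z) * ((ξ : ℂ) - 1 / (z ^ 2 - 1 + (1 / z) ^ 2))

/-- In polar coordinates `z = l e^{iφ}`, with `f = l + 1/l` and `a = 2cos(2φ) + 3`:
`f⁴ − (a+1)f² + (a−2)² = |z² − 1 + z⁻²|² ≠ 0` and
`Im θ_ξ(z) = √3 f sin φ (ξ + (f² − a)/(f⁴ − (a+1)f² + (a−2)²))`. -/
theorem stmt_4 (ξ l φ : ℝ) (hl : 0 < l)
    (hz4 : ((l : ℂ) * Complex.exp (φ * Complex.I)) ^ 4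
            - ((l : ℂ) * Complex.exp (φ * Complex.I)) ^ 2 + 1 ≠ 0) :
    let z : ℂ := (l : ℂ) * Complex.exp (φ * Complex.I)
    let f : ℝ := l + 1 / l
    let a : ℝ := 2 * Real.cos (2 * φ) + 3
    f ^ 4 - (a + 1) * f ^ 2 + (a - 2) ^ 2
        = ‖z ^ 2 - 1 + (1 / z) ^ 2‖ ^ 2 ∧
    f ^ 4 - (a + 1) * f ^ 2 + (a - 2) ^ 2 ≠ 0 ∧
    (phaseθ ξ z).im
        = Real.sqrt 3 * f * Real.sin φ *
            (ξ + (f ^ 2 - a) / (f ^ 4 - (a + 1) * f ^ 2 + (a - 2) ^ 2)) := by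
  intro z f a
  set c := Real.cos φ with hcdef
  set s := Real.sin φ with hsdef
  have hl0 : l ≠ 0 := ne_of_gt hl
  have hlC : (l : ℂ) ≠ 0 := by exact_mod_cast hl0
  have hz0 : z ≠ 0 := mul_ne_zero hlC (Complex.exp_ne_zero _)
  have hsc : s ^ 2 + c ^ 2 = 1 := Real.sin_sq_add_cos_sq φ
  have hscC : (s : ℂ) ^ 2 + (c : ℂ) ^ 2 = 1 := by exact_mod_cast hsc
  have hexp : Complex.exp (↑φ * Complex.I) = (c : ℂ) + (s : ℂ) * Complex.I := by
    rw [Complex.exp_mul_I, ← Complex.ofReal_cos, ← Complex.ofReal_sin]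
  have hzeq : z = (l : ℂ) * ((c : ℂ) + (s : ℂ) * Complex.I) := by
    rw [show z = (l : ℂ) * Complex.exp (φ * Complex.I) from rfl, hexp]
  have hcs0 : ((c : ℂ) + (s : ℂ) * Complex.I) ≠ 0 := by
    intro h; exact hz0 (by rw [hzeq, h, mul_zero])
  have hinv : 1 / z = (1 / (l : ℂ)) * ((c : ℂ) - (s : ℂ) * Complex.I) := by
    rw [hzeq]
    rw [div_eq_iff (mul_ne_zero hlC hcs0)]
    field_simp
    linear_combination (-1:ℂ) * hscC + (s:ℂ)^2 * Complex.I_sq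
  have hu : z - 1 / z
      = (((l - 1 / l) * c : ℝ) : ℂ) + (((l + 1 / l) * s : ℝ) : ℂ) * Complex.I := by
    rw [hinv, hzeq]; push_cast; ring
  set w := z ^ 2 - 1 + (1 / z) ^ 2 with hwdef
  have hw : w = (((l ^ 2 + 1 / l ^ 2) * (2 * c ^ 2 - 1) - 1 : ℝ) : ℂ)
      + (((l ^ 2 - 1 / l ^ 2) * (2 * s * c) : ℝ) : ℂ) * Complex.I := by
    rw [hwdef, hinv, hzeq]; push_cast
    linear_combination ((l:ℂ)^2 + ((l:ℂ))⁻¹^2) * (s:ℂ)^2 * Complex.I_sq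
      - ((l:ℂ)^2 + ((l:ℂ))⁻¹^2) * hscC
  have hwz : w * z ^ 2 = z ^ 4 - z ^ 2 + 1 := by
    rw [hwdef]; field_simp
  have hz4' : z ^ 4 - z ^ 2 + 1 ≠ 0 := hz4
  have hw0 : w ≠ 0 := by
    intro h; exact hz4' (by rw [← hwz, h, zero_mul])
  have hwre : w.re = (l ^ 2 + 1 / l ^ 2) * (2 * c ^ 2 - 1) - 1 := by
    rw [hw]
    simp only [Complex.add_re, Complex.mul_re, Complex.I_re, Complex.I_im,
      Complex.ofReal_re, Complex.ofReal_im]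
    ring
  have hwim : w.im = (l ^ 2 - 1 / l ^ 2) * (2 * s * c) := by
    rw [hw]
    simp only [Complex.add_im, Complex.mul_im, Complex.I_re, Complex.I_im,
      Complex.ofReal_re, Complex.ofReal_im]
    ring
  have ha : a = 2 * (2 * c ^ 2 - 1) + 3 := by
    rw [show a = 2 * Real.cos (2 * φ) + 3 from rfl, Real.cos_two_mul, ← hcdef]
  have hfeq : f = l + 1 / l := rfl
  have hD : f ^ 4 - (a + 1) * f ^ 2 + (a - 2) ^ 2 = Complex.normSq w := by
    rw [Complex.normSq_apply, hwre, hwim, ha, hfeq]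
    field_simp
    linear_combination (8*l^4*c^2 - 4*l^8*c^2 - 4*c^2) * hsc
  have hN0 : Complex.normSq w ≠ 0 := by
    simpa [Complex.normSq_eq_zero] using hw0
  refine ⟨by rw [Complex.sq_norm]; exact hD, by rw [hD]; exact hN0, ?_⟩
  have him : (phaseθ ξ z).im
      = Real.sqrt 3 * (((l - 1 / l) * c) * (w.im / Complex.normSq w)
          + ((l + 1 / l) * s) * (ξ - w.re / Complex.normSq w)) := by
    rw [phaseθ, ← hwdef, hu]
    simp [Complex.mul_im, Complex.mul_re, Complex.inv_re, Complex.inv_im,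
      Complex.div_ofNat_im]
    ring
  rw [him, hwre, hwim, hD, ha, hfeq]
  set d := Complex.normSq w with hddef
  field_simp
  ring
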